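/- arXiv:2301.04127 — 2 statements merged into one kernel-verified Lean document; each statement's English description precedes it below -/
import Mathlib

section
/- Let (S,h) be a smooth 4-polarized lattice, let Γ := root₁(S,h), and let c₁,c₂,c₃ ∈ Γ be a triangle. Then neither the pencil P := {c₁,c₂,c₃} ∪ {l ∈ Γ : ⟨l,c₁⟩ = ⟨l,c₂⟩ = ⟨l,c₃⟩ = 0} nor any of the sets sec_i := {l ∈ Γ : ⟨l,c_j⟩ = δ_{ij}} (i = 1,2,3), regarded as simple graphs in which distinct u,v are adjacent iff ⟨u,v⟩ = 1, has a connected component isomorphic to a single edge or to a path on three vertices (no connected components of types A₂ or A₃). -/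
/-!
Common definitions: 4-polarized lattices, lines, roots, Fano graphs
(following Degtyarev–Rams, "Counting lines with Vinberg's algorithm").
-/

namespace K3

variable {S : Type*} [AddCommGroup S] [Module ℤ S]

/-- `root₁(S,h)`: the *lines* of a 4-polarized lattice. -/
def root1 (B : S →ₗ[ℤ] S →ₗ[ℤ] ℤ) (h : S) : Set S :=
  {l : S | B l l = -2 ∧ B l h = 1}

/-- `root₀(S,h)`: the *roots* of a 4-polarized lattice. -/
def root0 (B : S →ₗ[ℤ] S →ₗ[ℤ] ℤ) (h : S) : Set S :=
  {r : S | B r r = -2 ∧ B r h = 0}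

/-- `(S,B,h)` is a 4-polarized lattice: `S` is a finitely generated free ℤ-module, `B`
a symmetric bilinear form, `⟨h,h⟩ = 4`, and `⟨v,v⟩ < 0` for nonzero `v ⊥ h`. -/
structure IsPolarized (B : S →ₗ[ℤ] S →ₗ[ℤ] ℤ) (h : S) : Prop where
  free : Module.Free ℤ S
  finite : Module.Finite ℤ S
  symm : ∀ u v : S, B u v = B v u
  deg : B h h = 4
  hyperbolic : ∀ v : S, v ≠ 0 → B v h = 0 → B v v < 0

/-- Admissibility: there is no `u` with `⟨u,u⟩ = 0` and `⟨u,h⟩ = 2`. -/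
def IsAdmissible (B : S →ₗ[ℤ] S →ₗ[ℤ] ℤ) (h : S) : Prop :=
  ¬ ∃ u : S, B u u = 0 ∧ B u h = 2

/-- The E₈ Cartan matrix (Bourbaki numbering of the Dynkin diagram). -/
def e8Cartan : Matrix (Fin 8) (Fin 8) ℤ :=
  !![2,0,-1,0,0,0,0,0;
     0,2,0,-1,0,0,0,0;
     -1,0,2,-1,0,0,0,0;
     0,-1,-1,2,-1,0,0,0;
     0,0,0,-1,2,-1,0,0;
     0,0,0,0,-1,2,-1,0;
     0,0,0,0,0,-1,2,-1;
     0,0,0,0,0,0,-1,2]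

/-- The Gram matrix of `L := E₈ ⊕ E₈ ⊕ U ⊕ U ⊕ U`, where `E₈` is *negative* definite
(Gram matrix the negative of the E₈ Cartan matrix) and `U` has Gram matrix `[[0,1],[1,0]]`. -/
def LGram : Matrix (Fin 22) (Fin 22) ℤ := fun i j =>
  if hi : (i : ℕ) < 8 then
    (if hj : (j : ℕ) < 8 then -e8Cartan ⟨i, hi⟩ ⟨j, hj⟩ else 0)
  else if hi' : (i : ℕ) < 16 then
    (if hj' : 8 ≤ (j : ℕ) ∧ (j : ℕ) < 16 then
      -e8Cartan ⟨(i : ℕ) - 8, by omega⟩ ⟨(j : ℕ) - 8, by omega⟩ else 0)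
  else
    (if 16 ≤ (j : ℕ) ∧ (i : ℕ) / 2 = (j : ℕ) / 2 ∧ i ≠ j then 1 else 0)

/-- A geometric 4-polarized lattice: admissible, even, and admitting a primitive isometric
embedding into `L = 2E₈ ⊕ 3U` (primitive = the quotient by the image is torsion-free). -/
structure IsGeometric (B : S →ₗ[ℤ] S →ₗ[ℤ] ℤ) (h : S) extends IsPolarized B h : Prop where
  admissible : IsAdmissible B h
  even : ∀ v : S, Even (B v v)
  embeds : ∃ f : S →ₗ[ℤ] (Fin 22 → ℤ), Function.Injective f ∧
    (∀ u v : S, B u v = ∑ i, ∑ j, f u i * LGram i j * f v j) ∧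
    (∀ (x : Fin 22 → ℤ) (n : ℤ), n ≠ 0 → n • x ∈ LinearMap.range f →
      x ∈ LinearMap.range f)

/-- A ℤ-linear functional is *Weyl-generic* if it does not vanish on any root. -/
def WeylGeneric (B : S →ₗ[ℤ] S →ₗ[ℤ] ℤ) (h : S) (φ : S →ₗ[ℤ] ℤ) : Prop :=
  ∀ r ∈ root0 B h, φ r ≠ 0

/-- The vertex set of the Fano graph `Fn_φ(S,h)`. -/
def fanoVerts (B : S →ₗ[ℤ] S →ₗ[ℤ] ℤ) (h : S) (φ : S →ₗ[ℤ] ℤ) : Set S :=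
  {l ∈ root1 B h | ∀ r ∈ root0 B h, 0 < φ r → 0 ≤ B l r}

/-- The set `Γ` together with `h` spans `S ⊗ ℚ`; since `S` is free, this is equivalent to:
every `s : S` has a nonzero integer multiple in the ℤ-span of `Γ ∪ {h}`. -/
def QSpannedByLines (Γ : Set S) (h : S) : Prop :=
  ∀ s : S, ∃ n : ℤ, n ≠ 0 ∧ n • s ∈ Submodule.span ℤ (Γ ∪ {h})

/-- The Fano graph as a simple graph on `Γ`: distinct `u, v` adjacent iff `⟨u,v⟩ = 1`. -/
def fanoGraph (B : S →ₗ[ℤ] S →ₗ[ℤ] ℤ) (Γ : Set S) : SimpleGraph Γ where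
  Adj u v := u ≠ v ∧ B u.1 v.1 = 1 ∧ B v.1 u.1 = 1
  symm := by constructor; intro u v hadj; exact ⟨hadj.1.symm, hadj.2.2, hadj.2.1⟩
  loopless := by constructor; intro u hadj; exact hadj.1 rfl

/-- `Γ` has no separating roots: no root is positive on one element of `Γ` and negative
on another. -/
def NoSeparatingRoots (B : S →ₗ[ℤ] S →ₗ[ℤ] ℤ) (h : S) (Γ : Set S) : Prop :=
  ¬ ∃ r ∈ root0 B h, ∃ u ∈ Γ, ∃ v ∈ Γ, 0 < B r u ∧ B r v < 0

/-- A triangle in a set `Γ` of lines: three distinct elements pairwise of product `1`. -/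
def IsTriangle (B : S →ₗ[ℤ] S →ₗ[ℤ] ℤ) (Γ : Set S) (c₁ c₂ c₃ : S) : Prop :=
  c₁ ∈ Γ ∧ c₂ ∈ Γ ∧ c₃ ∈ Γ ∧ c₁ ≠ c₂ ∧ c₁ ≠ c₃ ∧ c₂ ≠ c₃ ∧
    B c₁ c₂ = 1 ∧ B c₁ c₃ = 1 ∧ B c₂ c₃ = 1

/-- Simple sections through `a` of the triangle `(a,b,c)`:
`sec a := {l ∈ Γ : ⟨l,a⟩ = 1, ⟨l,b⟩ = ⟨l,c⟩ = 0}`. -/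
def sec (B : S →ₗ[ℤ] S →ₗ[ℤ] ℤ) (Γ : Set S) (a b c : S) : Set S :=
  {l ∈ Γ | B l a = 1 ∧ B l b = 0 ∧ B l c = 0}

/-- The pencil of a triangle `(c₁,c₂,c₃)` in `Γ`. -/
def pencil (B : S →ₗ[ℤ] S →ₗ[ℤ] ℤ) (Γ : Set S) (c₁ c₂ c₃ : S) : Set S :=
  {c₁, c₂, c₃} ∪ {l ∈ Γ | B l c₁ = 0 ∧ B l c₂ = 0 ∧ B l c₃ = 0}

end K3

namespace K3

/-- A 4-polarized lattice is *smooth* if it has no roots and no `u` with `⟨u,u⟩ = 0`,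
`⟨u,h⟩ = 2`. -/
def IsSmooth {S : Type*} [AddCommGroup S] [Module ℤ S]
    (B : S →ₗ[ℤ] S →ₗ[ℤ] ℤ) (h : S) : Prop :=
  root0 B h = ∅ ∧ IsAdmissible B h

/-- `X` (with adjacency "`⟨u,v⟩ = 1`") has a connected component which is a single edge
(type `A₂`): two distinct adjacent vertices to which no other vertex of `X` is adjacent. -/
def HasA2Component {S : Type*} [AddCommGroup S] [Module ℤ S]
    (B : S →ₗ[ℤ] S →ₗ[ℤ] ℤ) (X : Set S) : Prop :=
  ∃ u ∈ X, ∃ v ∈ X, u ≠ v ∧ B u v = 1 ∧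
    ∀ w ∈ X, w ≠ u → w ≠ v → B w u ≠ 1 ∧ B w v ≠ 1

/-- `X` (with adjacency "`⟨u,v⟩ = 1`") has a connected component which is a path on three
vertices (type `A₃`). -/
def HasA3Component {S : Type*} [AddCommGroup S] [Module ℤ S]
    (B : S →ₗ[ℤ] S →ₗ[ℤ] ℤ) (X : Set S) : Prop :=
  ∃ u ∈ X, ∃ v ∈ X, ∃ w ∈ X, u ≠ v ∧ u ≠ w ∧ v ≠ w ∧
    B u v = 1 ∧ B v w = 1 ∧ B u w ≠ 1 ∧
    ∀ x ∈ X, x ≠ u → x ≠ v → x ≠ w → B x u ≠ 1 ∧ B x v ≠ 1 ∧ B x w ≠ 1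

/-!
Every edge `{u, v}` of each of these sets lies in a triangle of the same set. In `sec a`
the lines `a, u, v` span a plane section of the quartic, whose residual line `h - a - u - v`
is again in `sec a`; in the pencil, two adjacent lines `u, v` off the triangle `a, b, c`
lie in a fibre of class `a + b + c`, whose third component `a + b + c - u - v` is again in
the pencil. A connected component containing a triangle is neither an edge nor a path.
-/

section EdgesLieInTriangles

variable {S : Type*} [AddCommGroup S] [Module ℤ S] {B : S →ₗ[ℤ] S →ₗ[ℤ] ℤ}

def EdgesLieInTriangles (B : S →ₗ[ℤ] S →ₗ[ℤ] ℤ) (X : Set S) : Prop :=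
  ∀ u ∈ X, ∀ v ∈ X, u ≠ v → B u v = 1 → ∃ x ∈ X, x ≠ u ∧ x ≠ v ∧ B x u = 1 ∧ B x v = 1

theorem EdgesLieInTriangles.not_hasA2Component {X : Set S} (hX : EdgesLieInTriangles B X) :
    ¬ HasA2Component B X := by
  rintro ⟨u, hu, v, hv, huv, huv₁, hcomp⟩
  obtain ⟨x, hx, hxu, hxv, hxu₁, -⟩ := hX u hu v hv huv huv₁
  exact (hcomp x hx hxu hxv).1 hxu₁

theorem EdgesLieInTriangles.not_hasA3Component {X : Set S} (hB : ∀ u v, B u v = B v u)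
    (hX : EdgesLieInTriangles B X) : ¬ HasA3Component B X := by
  rintro ⟨u, hu, v, hv, w, -, huv, -, -, huv₁, -, huw₁, hcomp⟩
  obtain ⟨x, hx, hxu, hxv, hxu₁, -⟩ := hX u hu v hv huv huv₁
  have hxw : x ≠ w := by
    rintro rfl
    exact huw₁ (hB u x ▸ hxu₁)
  exact (hcomp x hx hxu hxv hxw).1 hxu₁

theorem EdgesLieInTriangles.union {X Y : Set S} (hX : EdgesLieInTriangles B X)
    (hY : EdgesLieInTriangles B Y) (hXY : ∀ x ∈ X, ∀ y ∈ Y, B x y ≠ 1 ∧ B y x ≠ 1) :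
    EdgesLieInTriangles B (X ∪ Y) := by
  rintro u (hu | hu) v (hv | hv) huv huv₁
  · obtain ⟨x, hx, hx'⟩ := hX u hu v hv huv huv₁
    exact ⟨x, Or.inl hx, hx'⟩
  · exact absurd huv₁ (hXY u hu v hv).1
  · exact absurd huv₁ (hXY v hv u hu).2
  · obtain ⟨x, hx, hx'⟩ := hY u hu v hv huv huv₁
    exact ⟨x, Or.inr hx, hx'⟩

theorem edgesLieInTriangles_triple {a b c : S} (hB : ∀ u v, B u v = B v u)
    (hab : B a b = 1) (hac : B a c = 1) (hbc : B b c = 1) (hab' : a ≠ b) (hac' : a ≠ c)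
    (hbc' : b ≠ c) : EdgesLieInTriangles B {a, b, c} := by
  have hba : B b a = 1 := hB a b ▸ hab
  have hca : B c a = 1 := hB a c ▸ hac
  have hcb : B c b = 1 := hB b c ▸ hbc
  intro u hu v hv huv _
  simp only [Set.mem_insert_iff, Set.mem_singleton_iff] at hu hv
  rcases hu with hu | hu | hu <;> rcases hv with hv | hv | hv <;> subst u v <;>
    first
      | exact absurd rfl huv
      | exact ⟨a, by simp, by grind, by grind, by assumption, by assumption⟩
      | exact ⟨b, by simp, by grind, by grind, by assumption, by assumption⟩
      | exact ⟨c, by simp, by grind, by grind, by assumption, by assumption⟩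

end EdgesLieInTriangles

section Lines

variable {S : Type*} [AddCommGroup S] [Module ℤ S] {B : S →ₗ[ℤ] S →ₗ[ℤ] ℤ} {h : S}

theorem ne_of_mem_root1_of_apply_eq_one {x u : S} (hu : u ∈ root1 B h) (hxu : B x u = 1) :
    x ≠ u := by
  rintro rfl
  linarith [hu.1]

theorem IsTriangle.edgesLieInTriangles_pencil (hB : ∀ u v, B u v = B v u) {a b c : S}
    (hT : IsTriangle B (root1 B h) a b c) :
    EdgesLieInTriangles B (pencil B (root1 B h) a b c) := by
  obtain ⟨⟨haa, hah⟩, ⟨hbb, hbh⟩, ⟨hcc, hch⟩, hab', hac', hbc', hab, hac, hbc⟩ := hT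
  refine (edgesLieInTriangles_triple hB hab hac hbc hab' hac' hbc').union ?_ ?_
  · rintro u ⟨⟨huu, huh⟩, hua, hub, huc⟩ v ⟨⟨hvv, hvh⟩, hva, hvb, hvc⟩ - huv
    have hx : B (a + b + c - u - v) (a + b + c - u - v) = -2 ∧ B (a + b + c - u - v) h = 1 ∧
        B (a + b + c - u - v) a = 0 ∧ B (a + b + c - u - v) b = 0 ∧
        B (a + b + c - u - v) c = 0 ∧ B (a + b + c - u - v) u = 1 ∧
        B (a + b + c - u - v) v = 1 := by
      simp only [map_add, map_sub, LinearMap.add_apply, LinearMap.sub_apply]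
      refine ⟨?_, ?_, ?_, ?_, ?_, ?_, ?_⟩ <;>
        linarith [hB a b, hB a c, hB b c, hB a u, hB b u, hB c u, hB a v, hB b v, hB c v,
          hB u v]
    obtain ⟨hxx, hxh, hxa, hxb, hxc, hxu, hxv⟩ := hx
    exact ⟨_, ⟨⟨hxx, hxh⟩, hxa, hxb, hxc⟩, ne_of_mem_root1_of_apply_eq_one ⟨huu, huh⟩ hxu,
      ne_of_mem_root1_of_apply_eq_one ⟨hvv, hvh⟩ hxv, hxu, hxv⟩
  · rintro x hx y ⟨-, hya, hyb, hyc⟩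
    simp only [Set.mem_insert_iff, Set.mem_singleton_iff] at hx
    rcases hx with rfl | rfl | rfl <;> rw [hB] <;> omega

theorem edgesLieInTriangles_sec (hB : ∀ u v, B u v = B v u) (hh : B h h = 4) {a b c : S}
    (ha : a ∈ root1 B h) (hbh : B b h = 1) (hch : B c h = 1) (hab : B a b = 1)
    (hac : B a c = 1) : EdgesLieInTriangles B (sec B (root1 B h) a b c) := by
  obtain ⟨haa, hah⟩ := ha
  rintro u ⟨⟨huu, huh⟩, hua, hub, huc⟩ v ⟨⟨hvv, hvh⟩, hva, hvb, hvc⟩ - huv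
  have hx : B (h - a - u - v) (h - a - u - v) = -2 ∧ B (h - a - u - v) h = 1 ∧
      B (h - a - u - v) a = 1 ∧ B (h - a - u - v) b = 0 ∧ B (h - a - u - v) c = 0 ∧
      B (h - a - u - v) u = 1 ∧ B (h - a - u - v) v = 1 := by
    simp only [map_sub, LinearMap.sub_apply]
    refine ⟨?_, ?_, ?_, ?_, ?_, ?_, ?_⟩ <;>
      linarith [hB a h, hB u h, hB v h, hB b h, hB c h, hB a u, hB a v, hB u v, hB a b,
        hB a c]
  obtain ⟨hxx, hxh, hxa, hxb, hxc, hxu, hxv⟩ := hx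
  exact ⟨_, ⟨⟨hxx, hxh⟩, hxa, hxb, hxc⟩, ne_of_mem_root1_of_apply_eq_one ⟨huu, huh⟩ hxu,
    ne_of_mem_root1_of_apply_eq_one ⟨hvv, hvh⟩ hxv, hxu, hxv⟩

end Lines

theorem smooth_no_A2_A3_components_general
    {S : Type*} [AddCommGroup S] [Module ℤ S]
    (B : S →ₗ[ℤ] S →ₗ[ℤ] ℤ) (h : S)
    (hpol : IsPolarized B h)
    (c₁ c₂ c₃ : S) (htri : IsTriangle B (root1 B h) c₁ c₂ c₃) :
    ¬ HasA2Component B (pencil B (root1 B h) c₁ c₂ c₃) ∧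
    ¬ HasA3Component B (pencil B (root1 B h) c₁ c₂ c₃) ∧
    ¬ HasA2Component B (sec B (root1 B h) c₁ c₂ c₃) ∧
    ¬ HasA3Component B (sec B (root1 B h) c₁ c₂ c₃) ∧
    ¬ HasA2Component B (sec B (root1 B h) c₂ c₁ c₃) ∧
    ¬ HasA3Component B (sec B (root1 B h) c₂ c₁ c₃) ∧
    ¬ HasA2Component B (sec B (root1 B h) c₃ c₁ c₂) ∧
    ¬ HasA3Component B (sec B (root1 B h) c₃ c₁ c₂) := by
  obtain ⟨-, -, hB, hh, -⟩ := hpol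
  have hP := htri.edgesLieInTriangles_pencil hB
  obtain ⟨h₁, h₂, h₃, -, -, -, h₁₂, h₁₃, h₂₃⟩ := htri
  have hS₁ := edgesLieInTriangles_sec hB hh h₁ h₂.2 h₃.2 h₁₂ h₁₃
  have hS₂ := edgesLieInTriangles_sec hB hh h₂ h₁.2 h₃.2 (hB c₁ c₂ ▸ h₁₂) h₂₃
  have hS₃ := edgesLieInTriangles_sec hB hh h₃ h₁.2 h₂.2 (hB c₁ c₃ ▸ h₁₃) (hB c₂ c₃ ▸ h₂₃)
  exact ⟨hP.not_hasA2Component, hP.not_hasA3Component hB, hS₁.not_hasA2Component,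
    hS₁.not_hasA3Component hB, hS₂.not_hasA2Component, hS₂.not_hasA3Component hB,
    hS₃.not_hasA2Component, hS₃.not_hasA3Component hB⟩

/-- Lemma 4.1(2). In a smooth 4-polarized lattice, for a triangle
`c₁,c₂,c₃` in `Γ := root₁(S,h)`, neither the pencil nor any of the sets `sec_i` has a
connected component of type `A₂` or `A₃`. -/
theorem smooth_no_A2_A3_components
    {S : Type*} [AddCommGroup S] [Module ℤ S]
    (B : S →ₗ[ℤ] S →ₗ[ℤ] ℤ) (h : S)
    (hpol : IsPolarized B h) (hsm : IsSmooth B h)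
    (c₁ c₂ c₃ : S) (htri : IsTriangle B (root1 B h) c₁ c₂ c₃) :
    ¬ HasA2Component B (pencil B (root1 B h) c₁ c₂ c₃) ∧
    ¬ HasA3Component B (pencil B (root1 B h) c₁ c₂ c₃) ∧
    ¬ HasA2Component B (sec B (root1 B h) c₁ c₂ c₃) ∧
    ¬ HasA3Component B (sec B (root1 B h) c₁ c₂ c₃) ∧
    ¬ HasA2Component B (sec B (root1 B h) c₂ c₁ c₃) ∧
    ¬ HasA3Component B (sec B (root1 B h) c₂ c₁ c₃) ∧
    ¬ HasA2Component B (sec B (root1 B h) c₃ c₁ c₂) ∧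
    ¬ HasA3Component B (sec B (root1 B h) c₃ c₁ c₂) :=
  smooth_no_A2_A3_components_general B h hpol c₁ c₂ c₃ htri

end K3
end

section
/- Let (S,h) be a 4-polarized lattice and c ∈ root₁(S,h). Then the bilinear form is negative semidefinite on the ℚ-span (inside S ⊗ ℚ) of the set {l ∈ root₁(S,h) : ⟨l,c⟩ = 1} of all lines meeting c (every vector in this span has non-positive square). In particular, for any vertex c of the Fano graph, the set of lines intersecting c spans an elliptic or parabolic sublattice. -/
/-!
Every line `l` meeting `c` has `⟨l,h⟩ = ⟨l,c⟩ = 1`, so the same holds for `⟨v,h⟩ = ⟨v,c⟩ =: a`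
on their span. The correction `w = 3v + a c - a h` is orthogonal to `h`, so `⟨w,w⟩ ≤ 0` by
hyperbolicity, while a direct expansion gives `⟨w,w⟩ = 9 ⟨v,v⟩`.
-/

namespace K3

section

variable {S : Type*} [AddCommGroup S] [Module ℤ S] {B : S →ₗ[ℤ] S →ₗ[ℤ] ℤ} {h : S}

theorem IsPolarized.self_nonpos_of_orthogonal (hpol : IsPolarized B h) {w : S}
    (hw : B w h = 0) : B w w ≤ 0 := by
  rcases eq_or_ne w 0 with rfl | hne
  · simp
  · exact (hpol.hyperbolic w hne hw).le

theorem apply_eq_of_mem_span_lines_meeting {c v : S}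
    (hv : v ∈ Submodule.span ℤ {l ∈ root1 B h | B l c = 1}) : B v h = B v c :=
  LinearMap.eqOn_span (f := B.flip h) (g := B.flip c)
    (fun l hl => by simp only [LinearMap.flip_apply, hl.1.2, hl.2]) hv

theorem IsPolarized.self_nonpos_of_apply_eq (hpol : IsPolarized B h) {c v : S}
    (hc : c ∈ root1 B h) (hvc : B v h = B v c) : B v v ≤ 0 := by
  set a := B v h
  have hcc : B c c = -2 := hc.1
  have hch : B c h = 1 := hc.2
  have hhc : B h c = 1 := hpol.symm h c ▸ hch
  have hcv : B c v = a := hpol.symm c v ▸ hvc.symm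
  have hhv : B h v = a := hpol.symm h v
  set w : S := (3 : ℤ) • v + a • c - a • h
  have hwh : B w h = 0 := by
    simp only [w, map_sub, map_add, map_zsmul, LinearMap.sub_apply, LinearMap.add_apply,
      LinearMap.smul_apply, smul_eq_mul, hch, hpol.deg]
    ring
  have hww : B w w = 9 * B v v := by
    simp only [w, map_sub, map_add, map_zsmul, LinearMap.sub_apply, LinearMap.add_apply,
      LinearMap.smul_apply, smul_eq_mul, hcc, hch, hhc, hcv, hhv, hpol.deg, ← hvc]
    ring
  linarith [hpol.self_nonpos_of_orthogonal hwh]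

end

/-- equation (2.7). In a 4-polarized lattice, for any line `c`, the
form is negative semidefinite on the ℚ-span of the set of all lines meeting `c`.
(Negative semidefiniteness on the ℚ-span of a subset of `S` is equivalent to negative
semidefiniteness on its ℤ-span, by clearing denominators.) -/
theorem lines_meeting_a_line_span_semidefinite
    {S : Type*} [AddCommGroup S] [Module ℤ S]
    (B : S →ₗ[ℤ] S →ₗ[ℤ] ℤ) (h : S)
    (hpol : IsPolarized B h)
    (c : S) (hc : c ∈ root1 B h) :
    ∀ v ∈ Submodule.span ℤ {l ∈ root1 B h | B l c = 1}, B v v ≤ 0 :=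
  fun _ hv => hpol.self_nonpos_of_apply_eq hc (apply_eq_of_mem_span_lines_meeting hv)

end K3
end
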